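/- arXiv:2106.06926 — 2 statements merged into one kernel-verified Lean document; each statement's English description precedes it below -/
import Mathlib

section
/- (No-regret policy optimization with per-round MDPs) Suppose M_1,…,M_T are MDPs sharing the same transition kernel P, discount γ, and initial state s_0, and f_t = Q^{π_t}_{M_t} with values in [0, V_max]. If the policies are updated by π_{t+1}(a|s) ∝ π_t(a|s) exp(η f_t(s,a)) from the uniform policy π_1 with η = sqrt(log|A|/(2 V_max² T)), then max_{π} Σ_{t=1}^{T} (J_{M_t}(π) − J_{M_t}(π_t)) ≤ (2 V_max sqrt(2 T log|A|)) / (1−γ). -/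
/-
By the performance difference lemma, the regret of `π_t` in round `t` equals
`Σ_s ν(s) (f_t(s, π) - f_t(s, π_t))`, where `ν = Σ_k γ^k d_k` is the discounted state-visitation
measure of the comparator `π` in the shared dynamics; in particular `ν` does not depend on `t`.
Summing over `t`, the total regret is the `ν`-average of the regrets of exponential weights run
separately at every state, each of which is at most `log |A| / η + η T V_max² ≤ 2 V_max √(2 T log |A|)`,
and `ν` has total mass `1 / (1 - γ)`.
-/

open Finset

/-- Distribution of the state-action pair at time `t` under policy `π` started at `s0`,
for shared transition kernel `P`. -/
def stepDist {S A : Type*} [Fintype S] [Fintype A] [DecidableEq S]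
    (P : S → A → S → ℝ) (π : S → A → ℝ) (s0 : S) : ℕ → S × A → ℝ
  | 0 => fun p => (if p.1 = s0 then (1 : ℝ) else 0) * π p.1 p.2
  | (t + 1) => fun p => ∑ q : S × A, stepDist P π s0 t q * P q.1 q.2 p.1 * π p.1 p.2

/-- Expected discounted return of `π` in the MDP with transitions `P` and reward `R`,
started at `s0`. -/
noncomputable def ret {S A : Type*} [Fintype S] [Fintype A] [DecidableEq S]
    (P : S → A → S → ℝ) (γ : ℝ) (s0 : S) (R : S → A → ℝ) (π : S → A → ℝ) : ℝ :=
  ∑' t : ℕ, γ ^ t * ∑ p : S × A, stepDist P π s0 t p * R p.1 p.2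

section StdSimplex

variable {ι : Type*} [Fintype ι] {q : ι → ℝ}

lemma sum_mul_le_of_mem_stdSimplex (hq : q ∈ stdSimplex ℝ ι) {x : ι → ℝ} {c : ℝ}
    (hx : ∀ i, x i ≤ c) : ∑ i, q i * x i ≤ c :=
  calc ∑ i, q i * x i ≤ ∑ i, q i * c :=
        sum_le_sum fun i _ => mul_le_mul_of_nonneg_left (hx i) (hq.1 i)
    _ = c := by rw [← sum_mul, hq.2, one_mul]

lemma exists_pos_of_mem_stdSimplex (hq : q ∈ stdSimplex ℝ ι) : ∃ i, 0 < q i := by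
  obtain ⟨i, -, hi⟩ := exists_lt_of_sum_lt (s := univ) (f := 0) (g := q) (by simp [hq.2])
  exact ⟨i, hi⟩

lemma sum_mul_pos_of_mem_stdSimplex (hq : q ∈ stdSimplex ℝ ι) {x : ι → ℝ}
    (hx : ∀ i, 0 < x i) : 0 < ∑ i, q i * x i := by
  obtain ⟨i, hi⟩ := exists_pos_of_mem_stdSimplex hq
  exact sum_pos' (fun j _ => mul_nonneg (hq.1 j) (hx j).le) ⟨i, mem_univ i, mul_pos hi (hx i)⟩

lemma sum_mul_eq_of_mem_stdSimplex [Subsingleton ι] (hq : q ∈ stdSimplex ℝ ι) (x : ι → ℝ)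
    (i : ι) : ∑ j, q j * x j = x i := by
  have hqi : q i = 1 := by simpa [Fintype.sum_subsingleton _ i] using hq.2
  rw [Fintype.sum_subsingleton _ i, hqi, one_mul]

end StdSimplex

section MDP

variable {S A : Type*} [Fintype S] [Fintype A]
  {P : S → A → S → ℝ} {ρ : S → A → ℝ} {s0 : S} {γ : ℝ}

def transition (P : S → A → S → ℝ) (ρ : S → A → ℝ) (μ : S → ℝ) (s' : S) : ℝ :=
  ∑ s, μ s * ∑ a, ρ s a * P s a s'

lemma sum_transition_mul (μ h : S → ℝ) :
    ∑ s', transition P ρ μ s' * h s' = ∑ s, μ s * ∑ a, ρ s a * ∑ s', P s a s' * h s' := by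
  simp only [transition, sum_mul, mul_sum]
  rw [sum_comm]
  refine sum_congr rfl fun s _ => ?_
  rw [sum_comm]
  exact sum_congr rfl fun a _ => sum_congr rfl fun s' _ => by ring

lemma transition_mem_stdSimplex (hP : ∀ s a, P s a ∈ stdSimplex ℝ S)
    (hρ : ∀ s, ρ s ∈ stdSimplex ℝ A) {μ : S → ℝ} (hμ : μ ∈ stdSimplex ℝ S) :
    transition P ρ μ ∈ stdSimplex ℝ S := by
  refine ⟨fun s' => sum_nonneg fun s _ => mul_nonneg (hμ.1 s) <|
    sum_nonneg fun a _ => mul_nonneg ((hρ s).1 a) ((hP s a).1 s'), ?_⟩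
  simpa [(hP _ _).2, (hρ _).2, hμ.2] using sum_transition_mul (P := P) (ρ := ρ) μ 1

variable [DecidableEq S]

def stateDist (P : S → A → S → ℝ) (ρ : S → A → ℝ) (s0 : S) (k : ℕ) : S → ℝ :=
  (transition P ρ)^[k] (Pi.single s0 1)

lemma stateDist_succ (k : ℕ) :
    stateDist P ρ s0 (k + 1) = transition P ρ (stateDist P ρ s0 k) :=
  Function.iterate_succ_apply' _ _ _

lemma stateDist_mem_stdSimplex (hP : ∀ s a, P s a ∈ stdSimplex ℝ S)
    (hρ : ∀ s, ρ s ∈ stdSimplex ℝ A) (k : ℕ) : stateDist P ρ s0 k ∈ stdSimplex ℝ S := by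
  induction k with
  | zero => exact single_mem_stdSimplex ℝ s0
  | succ k ih => rw [stateDist_succ]; exact transition_mem_stdSimplex hP hρ ih

lemma stepDist_eq_stateDist_mul (k : ℕ) (p : S × A) :
    stepDist P ρ s0 k p = stateDist P ρ s0 k p.1 * ρ p.1 p.2 := by
  induction k generalizing p with
  | zero => simp [stepDist, stateDist, Pi.single_apply]
  | succ k ih =>
    simp only [stepDist, ih, stateDist_succ, transition, Fintype.sum_prod_type, sum_mul, mul_sum]
    exact sum_congr rfl fun s _ => sum_congr rfl fun a _ => by ring

/-- The paper's discounted occupancy `d_π` is `(1 - γ) • discountedVisits P γ s0 π`. -/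
noncomputable def discountedVisits (P : S → A → S → ℝ) (γ : ℝ) (s0 : S) (ρ : S → A → ℝ)
    (s : S) : ℝ :=
  ∑' k : ℕ, γ ^ k * stateDist P ρ s0 k s

lemma discountedVisits_nonneg (hP : ∀ s a, P s a ∈ stdSimplex ℝ S) (hγ0 : 0 ≤ γ)
    (hρ : ∀ s, ρ s ∈ stdSimplex ℝ A) (s : S) : 0 ≤ discountedVisits P γ s0 ρ s :=
  tsum_nonneg fun k => mul_nonneg (pow_nonneg hγ0 k) ((stateDist_mem_stdSimplex hP hρ k).1 s)

variable (hP : ∀ s a, P s a ∈ stdSimplex ℝ S) (hγ0 : 0 ≤ γ) (hγ1 : γ < 1)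
  (hρ : ∀ s, ρ s ∈ stdSimplex ℝ A)
include hP hγ0 hγ1 hρ

lemma summable_pow_mul_stateDist (s : S) :
    Summable fun k => γ ^ k * stateDist P ρ s0 k s := by
  refine (summable_geometric_of_lt_one hγ0 hγ1).of_nonneg_of_le (fun k => ?_) fun k => ?_
  all_goals have h := mem_Icc_of_mem_stdSimplex (stateDist_mem_stdSimplex (s0 := s0) hP hρ k) s
  · exact mul_nonneg (pow_nonneg hγ0 k) h.1
  · exact mul_le_of_le_one_right (pow_nonneg hγ0 k) h.2

lemma tsum_pow_mul_sum_stateDist_mul (x : S → ℝ) :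
    ∑' k : ℕ, γ ^ k * ∑ s, stateDist P ρ s0 k s * x s
      = ∑ s, discountedVisits P γ s0 ρ s * x s := by
  simp only [mul_sum, discountedVisits, ← tsum_mul_right, ← mul_assoc]
  exact Summable.tsum_finsetSum fun s _ =>
    (summable_pow_mul_stateDist hP hγ0 hγ1 hρ s).mul_right (x s)

lemma sum_discountedVisits : ∑ s, discountedVisits P γ s0 ρ s = (1 - γ)⁻¹ := by
  simpa [(stateDist_mem_stdSimplex hP hρ _).2, tsum_geometric_of_lt_one hγ0 hγ1] using
    (tsum_pow_mul_sum_stateDist_mul (s0 := s0) hP hγ0 hγ1 hρ 1).symm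

lemma discountedVisits_eq (s' : S) :
    discountedVisits P γ s0 ρ s'
      = (Pi.single s0 1 : S → ℝ) s' + γ * transition P ρ (discountedVisits P γ s0 ρ) s' := by
  rw [discountedVisits, (summable_pow_mul_stateDist hP hγ0 hγ1 hρ s').tsum_eq_zero_add,
    transition, ← tsum_pow_mul_sum_stateDist_mul hP hγ0 hγ1 hρ, ← tsum_mul_left]
  simp only [stateDist_succ, transition, pow_succ]
  congr 1
  · simp [stateDist]
  · exact tsum_congr fun k => by ring

lemma ret_eq_sum_discountedVisits_mul (R : S → A → ℝ) :
    ret P γ s0 R ρ = ∑ s, discountedVisits P γ s0 ρ s * ∑ a, ρ s a * R s a := by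
  rw [ret, ← tsum_pow_mul_sum_stateDist_mul hP hγ0 hγ1 hρ]
  refine tsum_congr fun k => ?_
  simp only [stepDist_eq_stateDist_mul, Fintype.sum_prod_type, mul_sum]
  exact sum_congr rfl fun s _ => sum_congr rfl fun a _ => by ring

/-- Performance difference lemma: integrate the Bellman equation of `Q` against the flow equation
`discountedVisits_eq` of `ρ`. -/
theorem ret_eq_sum_add_sum_discountedVisits_mul {R Q w : S → A → ℝ}
    (hQ : ∀ s a, Q s a = R s a + γ * ∑ s', P s a s' * ∑ a', w s' a' * Q s' a') :
    ret P γ s0 R ρ = ∑ a, w s0 a * Q s0 a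
      + ∑ s, discountedVisits P γ s0 ρ s * (∑ a, ρ s a * Q s a - ∑ a, w s a * Q s a) := by
  set ν := discountedVisits P γ s0 ρ
  set V : S → ℝ := fun s => ∑ a, w s a * Q s a
  have hbellman : ∑ s, ν s * ∑ a, ρ s a * Q s a
      = ret P γ s0 R ρ + γ * ∑ s', transition P ρ ν s' * V s' := by
    rw [ret_eq_sum_discountedVisits_mul hP hγ0 hγ1 hρ, sum_transition_mul, mul_sum,
      ← sum_add_distrib]
    refine sum_congr rfl fun s _ => ?_
    have hQs : ∀ a, ρ s a * Q s a
        = ρ s a * R s a + γ * (ρ s a * ∑ s', P s a s' * V s') := fun a => by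
      rw [hQ s a]; ring
    rw [sum_congr rfl fun a _ => hQs a, sum_add_distrib, ← mul_sum]
    ring
  have hflow : ∑ s', ν s' * V s' = V s0 + γ * ∑ s', transition P ρ ν s' * V s' :=
    calc ∑ s', ν s' * V s'
        = ∑ s', ((Pi.single s0 1 : S → ℝ) s' + γ * transition P ρ ν s') * V s' :=
          sum_congr rfl fun s' _ => congrArg (· * V s') (discountedVisits_eq hP hγ0 hγ1 hρ s')
      _ = V s0 + γ * ∑ s', transition P ρ ν s' * V s' := by
          simp [add_mul, sum_add_distrib, Pi.single_apply, mul_sum, mul_assoc]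
  simp only [mul_sub, sum_sub_distrib]
  linarith

theorem ret_sub_ret_eq_sum_discountedVisits_mul {R Q w : S → A → ℝ}
    (hw : ∀ s, w s ∈ stdSimplex ℝ A)
    (hQ : ∀ s a, Q s a = R s a + γ * ∑ s', P s a s' * ∑ a', w s' a' * Q s' a') :
    ret P γ s0 R ρ - ret P γ s0 R w
      = ∑ s, discountedVisits P γ s0 ρ s * (∑ a, ρ s a * Q s a - ∑ a, w s a * Q s a) := by
  rw [ret_eq_sum_add_sum_discountedVisits_mul hP hγ0 hγ1 hρ hQ,
    ret_eq_sum_add_sum_discountedVisits_mul hP hγ0 hγ1 hw hQ]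
  simp

end MDP

section Hedge

variable {A : Type*} [Fintype A]

lemma log_sum_mul_exp_le {q : A → ℝ} (hq : q ∈ stdSimplex ℝ A) {x : A → ℝ} {c : ℝ}
    (hx : ∀ a, |x a| ≤ c) (hc : c ≤ 1) :
    Real.log (∑ a, q a * Real.exp (x a)) ≤ ∑ a, q a * x a + c ^ 2 := by
  have hexp : ∀ a, Real.exp (x a) ≤ 1 + x a + c ^ 2 := fun a => by
    have h := abs_le.mp (Real.abs_exp_sub_one_sub_id_le ((hx a).trans hc))
    have hsq : x a ^ 2 ≤ c ^ 2 := sq_le_sq' (abs_le.mp (hx a)).1 (abs_le.mp (hx a)).2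
    linarith [h.2]
  calc Real.log (∑ a, q a * Real.exp (x a))
      ≤ ∑ a, q a * Real.exp (x a) - 1 :=
        Real.log_le_sub_one_of_pos (sum_mul_pos_of_mem_stdSimplex hq fun a => Real.exp_pos _)
    _ ≤ ∑ a, q a * (1 + x a + c ^ 2) - 1 := by
        gcongr with a
        exact hq.1 a
        exact hexp a
    _ = ∑ a, q a * x a + c ^ 2 := by
        simp only [mul_add, sum_add_distrib, ← sum_mul, hq.2]
        ring

def regret (T : ℕ) (g w : ℕ → A → ℝ) (p : A → ℝ) : ℝ :=
  ∑ t ∈ Icc 1 T, (∑ a, p a * g t a - ∑ a, w t a * g t a)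

variable {T : ℕ} {g w : ℕ → A → ℝ} {η V : ℝ} {p : A → ℝ}

lemma regret_le_mul (hg : ∀ t ∈ Icc 1 T, ∀ a, g t a ∈ Set.Icc 0 V)
    (hw : ∀ t, w t ∈ stdSimplex ℝ A) (hp : p ∈ stdSimplex ℝ A) : regret T g w p ≤ T * V :=
  calc regret T g w p ≤ ∑ _t ∈ Icc 1 T, V :=
        sum_le_sum fun t ht => by
          have h1 := sum_mul_le_of_mem_stdSimplex hp fun a => (hg t ht a).2
          have h2 : 0 ≤ ∑ a, w t a * g t a :=
            sum_nonneg fun a _ => mul_nonneg ((hw t).1 a) (hg t ht a).1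
          linarith
    _ = T * V := by simp

lemma regret_eq_zero [Subsingleton A] (hw : ∀ t, w t ∈ stdSimplex ℝ A)
    (hp : p ∈ stdSimplex ℝ A) (a : A) : regret T g w p = 0 := by
  simp only [regret, sum_mul_eq_of_mem_stdSimplex hp _ a,
    sum_mul_eq_of_mem_stdSimplex (hw _) _ a, sub_self, sum_const_zero]

section ExponentialWeights

variable (hw : ∀ t, w t ∈ stdSimplex ℝ A) (huni : ∀ a, w 1 a = 1 / Fintype.card A)
  (hupd : ∀ t ∈ Icc 1 T, ∀ a,
    w (t + 1) a = w t a * Real.exp (η * g t a) / ∑ a', w t a' * Real.exp (η * g t a'))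
include hw hupd

lemma weight_mul_prod_eq {n : ℕ} (hn : n ≤ T) (a : A) :
    w (n + 1) a * ∏ t ∈ Icc 1 n, ∑ a', w t a' * Real.exp (η * g t a')
      = w 1 a * Real.exp (η * ∑ t ∈ Icc 1 n, g t a) := by
  induction n with
  | zero => simp
  | succ n ih =>
    have hZ : ∑ a', w (n + 1) a' * Real.exp (η * g (n + 1) a') ≠ 0 :=
      (sum_mul_pos_of_mem_stdSimplex (hw _) fun _ => Real.exp_pos _).ne'
    rw [prod_Icc_succ_top (by omega), sum_Icc_succ_top (by omega), mul_add, Real.exp_add,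
      ← mul_assoc (w 1 a), ← ih (by omega), hupd (n + 1) (by simp; omega)]
    field_simp

include huni in
/-- Since `w (T + 1) a ≤ 1`, the product formula `weight_mul_prod_eq` bounds the cumulative gain
of every single action. -/
lemma mul_sum_le_log_card_add_sum_log (a : A) :
    η * ∑ t ∈ Icc 1 T, g t a
      ≤ Real.log (Fintype.card A)
        + ∑ t ∈ Icc 1 T, Real.log (∑ a', w t a' * Real.exp (η * g t a')) := by
  have hZ : ∀ t, 0 < ∑ a', w t a' * Real.exp (η * g t a') := fun t =>
    sum_mul_pos_of_mem_stdSimplex (hw t) fun _ => Real.exp_pos _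
  have hK : (0 : ℝ) < Fintype.card A := by
    exact_mod_cast Fintype.card_pos_iff.mpr ⟨a⟩
  have h := weight_mul_prod_eq hw hupd le_rfl a
  rw [huni] at h
  rw [← Real.exp_le_exp, Real.exp_add, Real.exp_sum, Real.exp_log hK]
  simp only [fun t => Real.exp_log (hZ t)]
  calc Real.exp (η * ∑ t ∈ Icc 1 T, g t a)
      = Fintype.card A * (w (T + 1) a * ∏ t ∈ Icc 1 T, ∑ a', w t a' * Real.exp (η * g t a')) := by
        rw [h]; field_simp
    _ ≤ Fintype.card A * ∏ t ∈ Icc 1 T, ∑ a', w t a' * Real.exp (η * g t a') := by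
        gcongr
        exact mul_le_of_le_one_left (prod_pos fun t _ => hZ t).le
          (mem_Icc_of_mem_stdSimplex (hw _) a).2

include huni in
theorem regret_le_log_card_div_add (hη : 0 < η) (hηV : η * V ≤ 1)
    (hg : ∀ t ∈ Icc 1 T, ∀ a, g t a ∈ Set.Icc 0 V) (hp : p ∈ stdSimplex ℝ A) :
    regret T g w p ≤ Real.log (Fintype.card A) / η + η * T * V ^ 2 := by
  have hlogZ : ∀ t ∈ Icc 1 T, Real.log (∑ a', w t a' * Real.exp (η * g t a'))
      ≤ η * ∑ a, w t a * g t a + (η * V) ^ 2 := by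
    intro t ht
    have h := log_sum_mul_exp_le (hw t) (x := fun a => η * g t a) (c := η * V) (fun a => by
      rw [abs_of_nonneg (mul_nonneg hη.le (hg t ht a).1)]
      exact mul_le_mul_of_nonneg_left (hg t ht a).2 hη.le) hηV
    simpa only [mul_sum, mul_left_comm η] using h
  have hswap : ∑ a, p a * (η * ∑ t ∈ Icc 1 T, g t a) = η * ∑ t ∈ Icc 1 T, ∑ a, p a * g t a := by
    simp only [mul_sum]
    rw [sum_comm]
    exact sum_congr rfl fun _ _ => sum_congr rfl fun _ _ => by ring
  have h1 := sum_mul_le_of_mem_stdSimplex hp (mul_sum_le_log_card_add_sum_log hw huni hupd)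
  have h2 := sum_le_sum hlogZ
  simp only [sum_add_distrib, sum_const, Nat.card_Icc, add_tsub_cancel_right, nsmul_eq_mul,
    ← mul_sum] at h2
  rw [div_add' _ _ _ hη.ne', le_div_iff₀ hη, regret, sum_sub_distrib]
  linarith

end ExponentialWeights

lemma learning_rate_spec {L V T η : ℝ} (hL : 0 < L) (hV : 0 < V) (hLT : L ≤ 2 * T)
    (hη : η = Real.sqrt (L / (2 * V ^ 2 * T))) :
    0 < η ∧ η * V ≤ 1 ∧ L / η + η * T * V ^ 2 ≤ 2 * V * Real.sqrt (2 * T * L) := by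
  set r := Real.sqrt (2 * T * L)
  have hT : 0 < T := by linarith
  have hr : r ^ 2 = 2 * T * L := Real.sq_sqrt (by positivity)
  have hrpos : 0 < r := Real.sqrt_pos.mpr (by positivity)
  have hηr : η = r / (2 * V * T) := by
    rw [hη, ← Real.sqrt_sq (by positivity : 0 ≤ r / (2 * V * T)), div_pow, hr]
    congr 1
    field_simp
  have hrT : r ≤ 2 * T := by nlinarith
  subst hηr
  refine ⟨by positivity, ?_, ?_⟩
  · rw [div_mul_eq_mul_div, div_le_one (by positivity)]
    nlinarith [mul_le_mul_of_nonneg_left hrT hV.le]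
  · rw [show L = r ^ 2 / (2 * T) by field_simp; linarith]
    field_simp
    nlinarith

theorem regret_le_two_mul_sqrt
    (hη : η = Real.sqrt (Real.log (Fintype.card A) / (2 * V ^ 2 * T)))
    (hg : ∀ t ∈ Icc 1 T, ∀ a, g t a ∈ Set.Icc 0 V) (hw : ∀ t, w t ∈ stdSimplex ℝ A)
    (huni : ∀ a, w 1 a = 1 / Fintype.card A)
    (hupd : ∀ t ∈ Icc 1 T, ∀ a,
      w (t + 1) a = w t a * Real.exp (η * g t a) / ∑ a', w t a' * Real.exp (η * g t a'))
    (hp : p ∈ stdSimplex ℝ A) :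
    regret T g w p ≤ 2 * V * Real.sqrt (2 * T * Real.log (Fintype.card A)) := by
  set L := Real.log (Fintype.card A)
  set r := Real.sqrt (2 * T * L)
  rcases Nat.eq_zero_or_pos T with rfl | hT
  · simp [regret, r]
  obtain ⟨a0, -⟩ := exists_pos_of_mem_stdSimplex hp
  have hV : 0 ≤ V := ((hg 1 (by simp; omega) a0).1).trans (hg 1 (by simp; omega) a0).2
  by_cases hsmall : T * V ≤ 2 * V * r
  · exact (regret_le_mul hg hw hp).trans hsmall
  -- Otherwise `8 L < T`, so the tuned `η` satisfies `η V ≤ 1`.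
  rw [not_le] at hsmall
  have hK : (1 : ℝ) ≤ Fintype.card A := by exact_mod_cast Fintype.card_pos_iff.mpr ⟨a0⟩
  rcases (Real.log_nonneg hK).eq_or_lt with hL | hL
  · -- a single action, where `η = 0`
    have : Subsingleton A := by
      refine Fintype.card_le_one_iff_subsingleton.mp ((Nat.cast_le_one (α := ℝ)).mp ?_)
      rw [← Real.exp_log (one_pos.trans_le hK), ← hL, Real.exp_zero]
    rw [regret_eq_zero hw hp a0]
    positivity
  have hVpos : 0 < V := by
    rcases hV.eq_or_lt with rfl | h
    · simp at hsmall
    · exact h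
  have hr : r ^ 2 = 2 * T * L := Real.sq_sqrt (by positivity)
  have h2r : 2 * r < T := lt_of_mul_lt_mul_right (by linarith) hV
  have hLT : L ≤ 2 * T := by nlinarith [Real.sqrt_nonneg (2 * T * L)]
  obtain ⟨hηpos, hηV, hbound⟩ := learning_rate_spec hL hVpos hLT hη
  exact (regret_le_log_card_div_add hw huni hupd hηpos hηV hg hp).trans hbound

end Hedge

theorem no_regret_policy_optimization_general
    {S A : Type*} [Fintype S] [Fintype A] [DecidableEq S]
    (P : S → A → S → ℝ) (hP0 : ∀ s a s', 0 ≤ P s a s') (hP1 : ∀ s a, ∑ s', P s a s' = 1)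
    (γ : ℝ) (hγ0 : 0 ≤ γ) (hγ1 : γ < 1) (s0 : S)
    (T : ℕ) (Vmax : ℝ)
    (Rt : ℕ → S → A → ℝ)                -- per-round rewards of the MDPs `M_t`
    (πt : ℕ → S → A → ℝ)                -- iterate policies
    (hπt0 : ∀ t s a, 0 ≤ πt t s a) (hπt1 : ∀ t s, ∑ a, πt t s a = 1)
    (f : ℕ → S → A → ℝ)                 -- `f t = Q^{π_t}_{M_t}`
    (hQ : ∀ t ∈ Icc 1 T, ∀ s a,
      f t s a = Rt t s a + γ * ∑ s', P s a s' * ∑ a', πt t s' a' * f t s' a')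
    (hfbd : ∀ t ∈ Icc 1 T, ∀ s a, f t s a ∈ Set.Icc (0 : ℝ) Vmax)
    (η : ℝ) (hη : η = Real.sqrt (Real.log (Fintype.card A) / (2 * Vmax ^ 2 * T)))
    (huni : ∀ s a, πt 1 s a = 1 / (Fintype.card A : ℝ))
    (hupd : ∀ t ∈ Icc 1 T, ∀ s a,
      πt (t + 1) s a
        = πt t s a * Real.exp (η * f t s a) / ∑ a', πt t s a' * Real.exp (η * f t s a')) :
    ∀ π : S → A → ℝ, (∀ s a, 0 ≤ π s a) → (∀ s, ∑ a, π s a = 1) →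
      ∑ t ∈ Icc 1 T, (ret P γ s0 (Rt t) π - ret P γ s0 (Rt t) (πt t))
        ≤ 2 * Vmax * Real.sqrt (2 * T * Real.log (Fintype.card A)) / (1 - γ) := by
  intro π hπ0 hπ1
  have hP : ∀ s a, P s a ∈ stdSimplex ℝ S := fun s a => ⟨hP0 s a, hP1 s a⟩
  have hπ : ∀ s, π s ∈ stdSimplex ℝ A := fun s => ⟨hπ0 s, hπ1 s⟩
  have hπt : ∀ t s, πt t s ∈ stdSimplex ℝ A := fun t s => ⟨hπt0 t s, hπt1 t s⟩
  set ν := discountedVisits P γ s0 π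
  set B := 2 * Vmax * Real.sqrt (2 * T * Real.log (Fintype.card A))
  have hstate : ∀ s, regret T (fun t a => f t s a) (fun t a => πt t s a) (π s) ≤ B :=
    fun s => regret_le_two_mul_sqrt hη (fun t ht a => hfbd t ht s a) (fun t => hπt t s)
      (fun a => huni s a) (fun t ht a => hupd t ht s a) (hπ s)
  calc ∑ t ∈ Icc 1 T, (ret P γ s0 (Rt t) π - ret P γ s0 (Rt t) (πt t))
      = ∑ t ∈ Icc 1 T, ∑ s, ν s * (∑ a, π s a * f t s a - ∑ a, πt t s a * f t s a) :=
        sum_congr rfl fun t ht =>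
          ret_sub_ret_eq_sum_discountedVisits_mul hP hγ0 hγ1 hπ (hπt t) (hQ t ht)
    _ = ∑ s, ν s * regret T (fun t a => f t s a) (fun t a => πt t s a) (π s) := by
        simp only [regret, mul_sum]
        exact sum_comm
    _ ≤ ∑ s, ν s * B := sum_le_sum fun s _ =>
        mul_le_mul_of_nonneg_left (hstate s) (discountedVisits_nonneg hP hγ0 hπ s)
    _ = B / (1 - γ) := by rw [← sum_mul, sum_discountedVisits hP hγ0 hγ1 hπ, inv_mul_eq_div]

/-- No-regret policy optimization with per-round MDPs `M_t` sharing dynamics `P`, discount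
`γ`, and initial state `s0`, with per-round rewards `Rt t`.  If `f t` is the `Q`-function of
`π_t` in `M_t` with values in `[0, V_max]` and the policies are updated by exponential
weights from the uniform policy, then the cumulative regret of the iterates against any
comparator policy `π` is at most `2 V_max √(2 T log |A|) / (1 − γ)`. -/
theorem no_regret_policy_optimization
    {S A : Type*} [Fintype S] [Fintype A] [DecidableEq S] [Nonempty A]
    (P : S → A → S → ℝ) (hP0 : ∀ s a s', 0 ≤ P s a s') (hP1 : ∀ s a, ∑ s', P s a s' = 1)
    (γ : ℝ) (hγ0 : 0 ≤ γ) (hγ1 : γ < 1) (s0 : S)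
    (T : ℕ) (Vmax : ℝ)
    (Rt : ℕ → S → A → ℝ)                -- per-round rewards of the MDPs `M_t`
    (πt : ℕ → S → A → ℝ)                -- iterate policies
    (hπt0 : ∀ t s a, 0 ≤ πt t s a) (hπt1 : ∀ t s, ∑ a, πt t s a = 1)
    (f : ℕ → S → A → ℝ)                 -- `f t = Q^{π_t}_{M_t}`
    (hQ : ∀ t ∈ Icc 1 T, ∀ s a,
      f t s a = Rt t s a + γ * ∑ s', P s a s' * ∑ a', πt t s' a' * f t s' a')
    (hfbd : ∀ t ∈ Icc 1 T, ∀ s a, f t s a ∈ Set.Icc (0 : ℝ) Vmax)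
    (η : ℝ) (hη : η = Real.sqrt (Real.log (Fintype.card A) / (2 * Vmax ^ 2 * T)))
    (huni : ∀ s a, πt 1 s a = 1 / (Fintype.card A : ℝ))
    (hupd : ∀ t ∈ Icc 1 T, ∀ s a,
      πt (t + 1) s a
        = πt t s a * Real.exp (η * f t s a) / ∑ a', πt t s a' * Real.exp (η * f t s a')) :
    ∀ π : S → A → ℝ, (∀ s a, 0 ≤ π s a) → (∀ s, ∑ a, π s a = 1) →
      ∑ t ∈ Icc 1 T, (ret P γ s0 (Rt t) π - ret P γ s0 (Rt t) (πt t))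
        ≤ 2 * Vmax * Real.sqrt (2 * T * Real.log (Fintype.card A)) / (1 - γ) :=
  no_regret_policy_optimization_general P hP0 hP1 γ hγ0 hγ1 s0 T Vmax Rt πt hπt0 hπt1 f hQ hfbd η hη
    huni hupd
end

section
/- (Pessimistic regularized evaluation is a valid lower bound up to slack) Suppose for policy π there exists f_π ∈ F with E(f_π,π;D) ≤ ε_r and ||f_π − T^π f_π||_{2,d_π} ≤ sqrt(ε_F). Then min_{f∈F}(f(s_0,π) + λ E(f,π;D)) ≤ J(π) + sqrt(ε_F)/(1−γ) + λ ε_r and max_{f∈F}(f(s_0,π) − λ E(f,π;D)) ≥ J(π) − sqrt(ε_F)/(1−γ) − λ ε_r, for any λ ≥ 0. -/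
open Finset

/-- Normalized discounted state-action occupancy of `π` started at `s0`. -/
noncomputable def occ {S A : Type*} [Fintype S] [Fintype A] [DecidableEq S]
    (P : S → A → S → ℝ) (γ : ℝ) (s0 : S) (π : S → A → ℝ) (p : S × A) : ℝ :=
  (1 - γ) * ∑' t : ℕ, γ ^ t * stepDist P π s0 t p

/-!
Unrolling the occupancy measure gives the flow identity
`∑ d_π (g − γ P^π g) = (1 − γ) g(s₀, π)` for every `g`; applied to `f` and combined with
`J(π) = ∑ d_π R / (1 − γ)` it turns `f(s₀, π) − J(π)` into the `d_π`-average of the Bellman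
residual `f − T^π f`, divided by `1 − γ`. Jensen's inequality bounds that average by the
`L²(d_π)` norm of the residual, which is at most `√ε_F` for `f_π`. Since `f_π` competes in both
the minimum and the maximum with regularization cost at most `λ ε_r`, both bounds follow.
-/

lemma abs_sum_mul_le_sqrt_sum_mul_sq {ι : Type*} (s : Finset ι) {w : ι → ℝ}
    (hw : ∀ i ∈ s, 0 ≤ w i) (hw1 : ∑ i ∈ s, w i = 1) (v : ι → ℝ) :
    |∑ i ∈ s, w i * v i| ≤ √(∑ i ∈ s, w i * v i ^ 2) := by
  refine Real.abs_le_sqrt ?_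
  have h := Finset.sum_sq_le_sum_mul_sum_of_sq_le_mul s hw
    (fun i hi => mul_nonneg (hw i hi) (sq_nonneg (v i))) (r := fun i => w i * v i)
    (fun i _ => le_of_eq (by ring))
  rwa [hw1, one_mul] at h

section OccupancyMeasure

variable {S A : Type*} [Fintype S] [Fintype A]

/-- The transition operator `P^π`, so that `T^π g = R + γ • nextExpectation P π g`. -/
def nextExpectation (P : S → A → S → ℝ) (π : S → A → ℝ) (g : S → A → ℝ) (s : S) (a : A) : ℝ :=
  ∑ s', P s a s' * ∑ a', π s' a' * g s' a'

def bellmanResidual (P : S → A → S → ℝ) (γ : ℝ) (R : S → A → ℝ) (π : S → A → ℝ)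
    (f : S → A → ℝ) (s : S) (a : A) : ℝ :=
  f s a - (R s a + γ * nextExpectation P π f s a)

lemma nextExpectation_one {P : S → A → S → ℝ} (hP1 : ∀ s a, ∑ s', P s a s' = 1)
    {π : S → A → ℝ} (hπ1 : ∀ s, ∑ a, π s a = 1) (s : S) (a : A) :
    nextExpectation P π (fun _ _ => 1) s a = 1 := by
  simp [nextExpectation, hπ1, hP1]

variable [DecidableEq S] {P : S → A → S → ℝ} {π : S → A → ℝ} {s0 : S} {γ : ℝ}

lemma sum_stepDist_zero_mul (g : S → A → ℝ) :
    ∑ p : S × A, stepDist P π s0 0 p * g p.1 p.2 = ∑ a, π s0 a * g s0 a := by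
  simp [stepDist, Fintype.sum_prod_type, Finset.sum_ite_eq']

lemma sum_stepDist_succ_mul (t : ℕ) (g : S → A → ℝ) :
    ∑ p : S × A, stepDist P π s0 (t + 1) p * g p.1 p.2 =
      ∑ p : S × A, stepDist P π s0 t p * nextExpectation P π g p.1 p.2 := by
  simp only [stepDist, nextExpectation, Finset.mul_sum, Finset.sum_mul]
  rw [Finset.sum_comm]
  refine Finset.sum_congr rfl fun q _ => ?_
  rw [Fintype.sum_prod_type]
  refine Finset.sum_congr rfl fun s' _ => Finset.sum_congr rfl fun a' _ => ?_
  ring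

lemma stepDist_nonneg (hP0 : ∀ s a s', 0 ≤ P s a s') (hπ0 : ∀ s a, 0 ≤ π s a) (t : ℕ)
    (p : S × A) : 0 ≤ stepDist P π s0 t p := by
  induction t generalizing p with
  | zero => exact mul_nonneg (by split_ifs <;> norm_num) (hπ0 _ _)
  | succ t ih =>
    exact Finset.sum_nonneg fun q _ => mul_nonneg (mul_nonneg (ih q) (hP0 _ _ _)) (hπ0 _ _)

lemma sum_stepDist (hP1 : ∀ s a, ∑ s', P s a s' = 1) (hπ1 : ∀ s, ∑ a, π s a = 1) (t : ℕ) :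
    ∑ p : S × A, stepDist P π s0 t p = 1 := by
  induction t with
  | zero => simpa [hπ1] using sum_stepDist_zero_mul (P := P) (π := π) (s0 := s0) (fun _ _ => 1)
  | succ t ih =>
    simpa [nextExpectation_one hP1 hπ1, ih] using
      sum_stepDist_succ_mul (P := P) (π := π) (s0 := s0) t (fun _ _ => 1)

lemma stepDist_le_one (hP0 : ∀ s a s', 0 ≤ P s a s') (hP1 : ∀ s a, ∑ s', P s a s' = 1)
    (hπ0 : ∀ s a, 0 ≤ π s a) (hπ1 : ∀ s, ∑ a, π s a = 1) (t : ℕ) (p : S × A) :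
    stepDist P π s0 t p ≤ 1 :=
  sum_stepDist (s0 := s0) hP1 hπ1 t ▸
    Finset.single_le_sum (fun q _ => stepDist_nonneg hP0 hπ0 t q) (Finset.mem_univ p)

lemma occ_nonneg (hP0 : ∀ s a s', 0 ≤ P s a s') (hπ0 : ∀ s a, 0 ≤ π s a) (hγ0 : 0 ≤ γ)
    (hγ1 : γ < 1) (p : S × A) : 0 ≤ occ P γ s0 π p :=
  mul_nonneg (sub_nonneg.mpr hγ1.le)
    (tsum_nonneg fun t => mul_nonneg (pow_nonneg hγ0 t) (stepDist_nonneg hP0 hπ0 t p))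

variable (hP0 : ∀ s a s', 0 ≤ P s a s') (hP1 : ∀ s a, ∑ s', P s a s' = 1)
  (hπ0 : ∀ s a, 0 ≤ π s a) (hπ1 : ∀ s, ∑ a, π s a = 1) (hγ0 : 0 ≤ γ) (hγ1 : γ < 1)
include hP0 hP1 hπ0 hπ1 hγ0 hγ1

variable (s0)

lemma hasSum_discounted_stepDist (p : S × A) :
    HasSum (fun t : ℕ => γ ^ t * stepDist P π s0 t p) (occ P γ s0 π p / (1 - γ)) := by
  have hsum : Summable (fun t : ℕ => γ ^ t * stepDist P π s0 t p) :=
    (summable_geometric_of_lt_one hγ0 hγ1).of_nonneg_of_le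
      (fun t => mul_nonneg (pow_nonneg hγ0 t) (stepDist_nonneg hP0 hπ0 t p))
      (fun t => mul_le_of_le_one_right (pow_nonneg hγ0 t) (stepDist_le_one hP0 hP1 hπ0 hπ1 t p))
  convert hsum.hasSum using 1
  rw [occ, mul_div_cancel_left₀ _ (sub_ne_zero.mpr hγ1.ne')]

lemma hasSum_discounted_expectation (g : S → A → ℝ) :
    HasSum (fun t : ℕ => γ ^ t * ∑ p : S × A, stepDist P π s0 t p * g p.1 p.2)
      ((∑ p : S × A, occ P γ s0 π p * g p.1 p.2) / (1 - γ)) := by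
  have h := hasSum_sum fun p (_ : p ∈ Finset.univ) =>
    (hasSum_discounted_stepDist s0 hP0 hP1 hπ0 hπ1 hγ0 hγ1 p).mul_right (g p.1 p.2)
  simp only [div_mul_eq_mul_div, ← Finset.sum_div, mul_assoc, ← Finset.mul_sum] at h
  exact h

lemma ret_eq_sum_occ_mul (R : S → A → ℝ) :
    ret P γ s0 R π = (∑ p : S × A, occ P γ s0 π p * R p.1 p.2) / (1 - γ) :=
  (hasSum_discounted_expectation s0 hP0 hP1 hπ0 hπ1 hγ0 hγ1 R).tsum_eq

/-- The flow equation `d_π = (1 - γ) δ_{s₀} π + γ d_π P^π`, tested against `g`. -/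
lemma sum_occ_mul_sub_nextExpectation (g : S → A → ℝ) :
    ∑ p : S × A, occ P γ s0 π p * (g p.1 p.2 - γ * nextExpectation P π g p.1 p.2)
      = (1 - γ) * ∑ a, π s0 a * g s0 a := by
  have hshift : HasSum (fun t : ℕ => γ ^ (t + 1) *
      ∑ p : S × A, stepDist P π s0 (t + 1) p * g p.1 p.2)
      (γ * ((∑ p : S × A, occ P γ s0 π p * nextExpectation P π g p.1 p.2) / (1 - γ))) := by
    have h := (hasSum_discounted_expectation s0 hP0 hP1 hπ0 hπ1 hγ0 hγ1
      (nextExpectation P π g)).mul_left γ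
    simp only [← sum_stepDist_succ_mul] at h
    exact h.congr_fun fun t => by ring
  have hunroll := (hasSum_discounted_expectation s0 hP0 hP1 hπ0 hπ1 hγ0 hγ1 g).unique
    (hshift.zero_add (f := fun t : ℕ => γ ^ t * ∑ p : S × A, stepDist P π s0 t p * g p.1 p.2))
  rw [pow_zero, one_mul, sum_stepDist_zero_mul] at hunroll
  have hγ : 1 - γ ≠ 0 := sub_ne_zero.mpr hγ1.ne'
  field_simp at hunroll
  simp only [mul_sub, Finset.sum_sub_distrib, mul_left_comm _ γ, ← Finset.mul_sum]
  linarith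

lemma sum_occ : ∑ p : S × A, occ P γ s0 π p = 1 := by
  have h := sum_occ_mul_sub_nextExpectation s0 hP0 hP1 hπ0 hπ1 hγ0 hγ1 (fun _ _ => 1)
  simp only [nextExpectation_one hP1 hπ1, mul_one, hπ1, ← Finset.sum_mul] at h
  exact mul_right_cancel₀ (sub_ne_zero.mpr hγ1.ne') (h.trans (one_mul _).symm)

lemma initialValue_sub_ret (R f : S → A → ℝ) :
    ∑ a, π s0 a * f s0 a - ret P γ s0 R π =
      (∑ p : S × A, occ P γ s0 π p * bellmanResidual P γ R π f p.1 p.2) / (1 - γ) := by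
  have hγ : 1 - γ ≠ 0 := sub_ne_zero.mpr hγ1.ne'
  rw [ret_eq_sum_occ_mul s0 hP0 hP1 hπ0 hπ1 hγ0 hγ1, eq_div_iff hγ, sub_mul,
    div_mul_cancel₀ _ hγ, mul_comm, ← sum_occ_mul_sub_nextExpectation s0 hP0 hP1 hπ0 hπ1 hγ0 hγ1]
  simp only [bellmanResidual, mul_sub, mul_add, Finset.sum_sub_distrib, Finset.sum_add_distrib]
  ring

lemma abs_initialValue_sub_ret_le (R f : S → A → ℝ) :
    |∑ a, π s0 a * f s0 a - ret P γ s0 R π| ≤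
      √(∑ p : S × A, occ P γ s0 π p * bellmanResidual P γ R π f p.1 p.2 ^ 2) / (1 - γ) := by
  rw [initialValue_sub_ret s0 hP0 hP1 hπ0 hπ1 hγ0 hγ1, abs_div, abs_of_pos (sub_pos.mpr hγ1)]
  gcongr
  exact abs_sum_mul_le_sqrt_sum_mul_sq _ (fun p _ => occ_nonneg hP0 hπ0 hγ0 hγ1 p)
    (sum_occ s0 hP0 hP1 hπ0 hπ1 hγ0 hγ1) _

end OccupancyMeasure

lemma Finset.finite_setOf_exists_mem_eq {ι α : Type*} (F : Finset ι) (g : ι → α) :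
    {v | ∃ f ∈ F, v = g f}.Finite :=
  (F.finite_toSet.image g).subset fun _ ⟨f, hf, hv⟩ => ⟨f, hf, hv.symm⟩

lemma csInf_le_of_mem_finset {ι α : Type*} [ConditionallyCompleteLinearOrder α] {F : Finset ι}
    (g : ι → α) {i : ι} (hi : i ∈ F) : sInf {v | ∃ f ∈ F, v = g f} ≤ g i :=
  have : Nonempty α := ⟨g i⟩
  csInf_le (F.finite_setOf_exists_mem_eq g).bddBelow ⟨i, hi, rfl⟩

lemma le_csSup_of_mem_finset {ι α : Type*} [ConditionallyCompleteLinearOrder α] {F : Finset ι}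
    (g : ι → α) {i : ι} (hi : i ∈ F) : g i ≤ sSup {v | ∃ f ∈ F, v = g f} :=
  have : Nonempty α := ⟨g i⟩
  le_csSup (F.finite_setOf_exists_mem_eq g).bddAbove ⟨i, hi, rfl⟩

theorem regularized_pessimism_valid_bounds_general
    {S A : Type*} [Fintype S] [Fintype A] [DecidableEq S]
    (P : S → A → S → ℝ) (hP0 : ∀ s a s', 0 ≤ P s a s') (hP1 : ∀ s a, ∑ s', P s a s' = 1)
    (R : S → A → ℝ)
    (γ : ℝ) (hγ0 : 0 ≤ γ) (hγ1 : γ < 1) (s0 : S)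
    (π : S → A → ℝ) (hπ0 : ∀ s a, 0 ≤ π s a) (hπ1 : ∀ s, ∑ a, π s a = 1)
    (F : Finset (S → A → ℝ))
    (Eproxy : (S → A → ℝ) → ℝ)
    (εr εF : ℝ) (lam : ℝ) (hlam : 0 ≤ lam)
    (fπ : S → A → ℝ) (hfπF : fπ ∈ F) (hfπE : Eproxy fπ ≤ εr)
    (hfπbe : Real.sqrt (∑ p : S × A, occ P γ s0 π p *
        (fπ p.1 p.2 - (R p.1 p.2 + γ * ∑ s', P p.1 p.2 s' * ∑ a', π s' a' * fπ s' a')) ^ 2)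
      ≤ Real.sqrt εF) :
    sInf {v : ℝ | ∃ f ∈ F, v = (∑ a, π s0 a * f s0 a) + lam * Eproxy f}
        ≤ ret P γ s0 R π + Real.sqrt εF / (1 - γ) + lam * εr
    ∧ ret P γ s0 R π - Real.sqrt εF / (1 - γ) - lam * εr
        ≤ sSup {v : ℝ | ∃ f ∈ F, v = (∑ a, π s0 a * f s0 a) - lam * Eproxy f} := by
  have hgap : |∑ a, π s0 a * fπ s0 a - ret P γ s0 R π| ≤ √εF / (1 - γ) :=
    (abs_initialValue_sub_ret_le s0 hP0 hP1 hπ0 hπ1 hγ0 hγ1 R fπ).trans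
      (div_le_div_of_nonneg_right hfπbe (sub_nonneg.mpr hγ1.le))
  obtain ⟨hlow, hup⟩ := abs_le.mp hgap
  have hreg : lam * Eproxy fπ ≤ lam * εr := mul_le_mul_of_nonneg_left hfπE hlam
  exact ⟨(csInf_le_of_mem_finset (fun f => ∑ a, π s0 a * f s0 a + lam * Eproxy f) hfπF).trans
      (by linarith),
    le_trans (by linarith)
      (le_csSup_of_mem_finset (fun f => ∑ a, π s0 a * f s0 a - lam * Eproxy f) hfπF)⟩

/-- Pessimistic regularized evaluation is a valid lower bound up to slack: if some `fπ ∈ F`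
has `E(fπ,π;D) ≤ ε_r` and `‖fπ − T^π fπ‖_{2,d_π} ≤ √ε_F`, then for any `λ ≥ 0`,
`min_{f∈F} (f(s0,π) + λ E(f,π;D)) ≤ J(π) + √ε_F/(1−γ) + λ ε_r` and
`max_{f∈F} (f(s0,π) − λ E(f,π;D)) ≥ J(π) − √ε_F/(1−γ) − λ ε_r`. -/
theorem regularized_pessimism_valid_bounds
    {S A : Type*} [Fintype S] [Fintype A] [DecidableEq S]
    (P : S → A → S → ℝ) (hP0 : ∀ s a s', 0 ≤ P s a s') (hP1 : ∀ s a, ∑ s', P s a s' = 1)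
    (R : S → A → ℝ) (Rmax : ℝ) (hR : ∀ s a, R s a ∈ Set.Icc (0 : ℝ) Rmax)
    (γ : ℝ) (hγ0 : 0 ≤ γ) (hγ1 : γ < 1) (s0 : S)
    (π : S → A → ℝ) (hπ0 : ∀ s a, 0 ≤ π s a) (hπ1 : ∀ s, ∑ a, π s a = 1)
    (Vmax : ℝ) (F : Finset (S → A → ℝ)) (hFbd : ∀ f ∈ F, ∀ s a, f s a ∈ Set.Icc (0 : ℝ) Vmax)
    (Eproxy : (S → A → ℝ) → ℝ) (hE0 : ∀ f ∈ F, 0 ≤ Eproxy f)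
    (εr εF : ℝ) (lam : ℝ) (hlam : 0 ≤ lam)
    (fπ : S → A → ℝ) (hfπF : fπ ∈ F) (hfπE : Eproxy fπ ≤ εr)
    (hfπbe : Real.sqrt (∑ p : S × A, occ P γ s0 π p *
        (fπ p.1 p.2 - (R p.1 p.2 + γ * ∑ s', P p.1 p.2 s' * ∑ a', π s' a' * fπ s' a')) ^ 2)
      ≤ Real.sqrt εF) :
    sInf {v : ℝ | ∃ f ∈ F, v = (∑ a, π s0 a * f s0 a) + lam * Eproxy f}
        ≤ ret P γ s0 R π + Real.sqrt εF / (1 - γ) + lam * εr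
    ∧ ret P γ s0 R π - Real.sqrt εF / (1 - γ) - lam * εr
        ≤ sSup {v : ℝ | ∃ f ∈ F, v = (∑ a, π s0 a * f s0 a) - lam * Eproxy f} :=
  regularized_pessimism_valid_bounds_general P hP0 hP1 R γ hγ0 hγ1 s0 π hπ0 hπ1 F Eproxy εr εF lam
    hlam fπ hfπF hfπE hfπbe
end
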